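/- arXiv:1506.05453 — 5 statements merged into one kernel-verified Lean document; each statement's English description precedes it below -/
import Mathlib

section
/- Let M(x) = x for all x ∈ [0,∞). The set C_∞(M, Δ_4) = { real sequences x = (x_k)_{k≥1} : there exists ρ > 0 with sup_{i≥1} (1/i) Σ_{k=1}^{i} M(|Δ_4 x_k|/ρ) < ∞ }, where Δ_4 x_k = x_k − x_{k+4}, is not symmetric: there exists a sequence x ∈ C_∞(M, Δ_4) (one may take x_k = k) and a bijection π of the positive integers such that the rearranged sequence (x_{π(k)})_{k≥1} does not belong to C_∞(M, Δ_4). -/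
/-!
Statement 12 (Paper: Theorem 3.3 with Example 3.2).  With `M = id`, the space
`C_∞(M, Δ_4)` is not symmetric: the sequence `x_k = k` belongs to it, but some
rearrangement of it does not.  Sequences are indexed so that `x k` represents
the paper's `x_{k+1}`.
-/

open scoped ENNReal

/-- The generalized difference operator (`Δ_4 = delta 4 1`). -/
def delta (m : ℕ) : ℕ → (ℕ → ℝ) → ℕ → ℝ
  | 0, x => x
  | n + 1, x => fun k => delta m n x k - delta m n x (k + m)

/-- The Cesàro average `(1/i) ∑_{k=1}^{i} M (|x_k| / ρ)`, where `i` here is `i+1`. -/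
noncomputable def cesTerm (M : ℝ → ℝ) (x : ℕ → ℝ) (ρ : ℝ) (i : ℕ) : ℝ :=
  (1 / (i + 1 : ℝ)) * ∑ k ∈ Finset.range (i + 1), M (|x k| / ρ)

/-- `sup_{i ≥ 1} (1/i) ∑_{k=1}^{i} M (|x_k| / ρ)`, valued in `ℝ≥0∞`. -/
noncomputable def cesSup (M : ℝ → ℝ) (x : ℕ → ℝ) (ρ : ℝ) : ℝ≥0∞ :=
  ⨆ i : ℕ, ENNReal.ofReal (cesTerm M x ρ i)

/-- The space `C_∞(M, Δ_m^n)`. -/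
def CInftyMDelta (M : ℝ → ℝ) (m n : ℕ) : Set (ℕ → ℝ) :=
  {x | ∃ ρ > 0, cesSup M (delta m n x) ρ < ⊤}

/-- A symmetric set of sequences: closed under all rearrangements. -/
def SymmetricSet (E : Set (ℕ → ℝ)) : Prop :=
  ∀ x ∈ E, ∀ π : Equiv.Perm ℕ, (fun k => x (π k)) ∈ E


/-! For `M = id`, a single term of a bounded Cesàro mean already shows that a member of `C_∞(M, Δ_m^n)` has
differences of at most linear growth: `|Δx_k| ≤ (k + 1) ρ · sup`.  The sequence `x_k = k` has constant `Δ_4`, but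
swapping `k` and `2 ^ k` for every `k ≡ 1 (mod 4)` rearranges it into a sequence with `|Δ_4 y_k| = 15 · 2 ^ k` at
those `k`, which is not linearly bounded. -/

lemma delta_one_apply (m : ℕ) (x : ℕ → ℝ) (k : ℕ) : delta m 1 x k = x k - x (k + m) := rfl

section Cesaro

variable {M : ℝ → ℝ} {x : ℕ → ℝ} {ρ : ℝ}

lemma cesSup_lt_top_iff_bddAbove : cesSup M x ρ < ⊤ ↔ BddAbove (Set.range (cesTerm M x ρ)) := by
  constructor
  · intro h
    refine ⟨(cesSup M x ρ).toReal, ?_⟩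
    rintro _ ⟨i, rfl⟩
    exact (ENNReal.ofReal_le_iff_le_toReal h.ne).1 (le_iSup (fun i => ENNReal.ofReal (cesTerm M x ρ i)) i)
  · rintro ⟨C, hC⟩
    exact (iSup_le fun i => ENNReal.ofReal_le_ofReal (hC ⟨i, rfl⟩)).trans_lt ENNReal.ofReal_lt_top

lemma cesTerm_of_abs_eq {c : ℝ} (hx : ∀ k, |x k| = c) (i : ℕ) : cesTerm M x ρ i = M (c / ρ) := by
  simp only [cesTerm, hx, Finset.sum_const, Finset.card_range, nsmul_eq_mul]
  field_simp
  push_cast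
  ring

lemma div_le_cesTerm (hM : ∀ t, 0 ≤ t → 0 ≤ M t) (hρ : 0 ≤ ρ) {k i : ℕ} (hki : k ≤ i) :
    M (|x k| / ρ) / (i + 1) ≤ cesTerm M x ρ i := by
  rw [cesTerm, one_div_mul_eq_div]
  gcongr
  exact Finset.single_le_sum (f := fun j => M (|x j| / ρ)) (fun j _ => hM _ (by positivity))
    (Finset.mem_range_succ_iff.2 hki)

end Cesaro

lemma mem_CInftyMDelta_of_abs_delta_eq {M : ℝ → ℝ} {m n : ℕ} {x : ℕ → ℝ} {c : ℝ}
    (hx : ∀ k, |delta m n x k| = c) : x ∈ CInftyMDelta M m n := by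
  refine ⟨1, one_pos, cesSup_lt_top_iff_bddAbove.2 ⟨M (c / 1), ?_⟩⟩
  rintro _ ⟨i, rfl⟩
  exact (cesTerm_of_abs_eq hx i).le

lemma exists_abs_delta_le_of_mem_CInftyMDelta_id {m n : ℕ} {x : ℕ → ℝ}
    (hx : x ∈ CInftyMDelta (fun t => t) m n) : ∃ C : ℝ, ∀ k : ℕ, |delta m n x k| ≤ C * (k + 1) := by
  obtain ⟨ρ, hρ, hlt⟩ := hx
  obtain ⟨B, hB⟩ := cesSup_lt_top_iff_bddAbove.1 hlt
  refine ⟨B * ρ, fun k => ?_⟩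
  have hk := (div_le_cesTerm (fun _ ht => ht) hρ.le le_rfl).trans (hB ⟨k, rfl⟩)
  rw [div_le_iff₀ (by positivity), div_le_iff₀ hρ] at hk
  linarith

lemma two_pow_mod_four_ne_one {n : ℕ} (hn : n ≠ 0) : 2 ^ n % 4 ≠ 1 := by
  obtain ⟨n, rfl⟩ := Nat.exists_eq_succ_of_ne_zero hn
  rw [pow_succ]
  omega

/-- Swaps `k` and `2 ^ k` for every `k ≡ 1 (mod 4)`; these pairs are disjoint since `2 ^ k ≢ 1 (mod 4)`. -/
def swapPow (n : ℕ) : ℕ :=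
  if n % 4 = 1 then 2 ^ n
  else if 2 ^ Nat.log 2 n = n ∧ Nat.log 2 n % 4 = 1 then Nat.log 2 n
  else n

lemma swapPow_of_mod_four_eq_one {n : ℕ} (hn : n % 4 = 1) : swapPow n = 2 ^ n := if_pos hn

lemma swapPow_two_pow {n : ℕ} (hn : n % 4 = 1) : swapPow (2 ^ n) = n := by
  rw [swapPow, if_neg (two_pow_mod_four_ne_one (by omega)), Nat.log_pow one_lt_two, if_pos ⟨rfl, hn⟩]

lemma swapPow_involutive : Function.Involutive swapPow := by
  intro n
  by_cases h₁ : n % 4 = 1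
  · rw [swapPow_of_mod_four_eq_one h₁, swapPow_two_pow h₁]
  by_cases h₂ : 2 ^ Nat.log 2 n = n ∧ Nat.log 2 n % 4 = 1
  · have h : swapPow n = Nat.log 2 n := by rw [swapPow, if_neg h₁, if_pos h₂]
    rw [h, swapPow_of_mod_four_eq_one h₂.2, h₂.1]
  · have h : swapPow n = n := by rw [swapPow, if_neg h₁, if_neg h₂]
    rw [h, h]

lemma abs_delta_four_swapPow {k : ℕ} (hk : k % 4 = 1) :
    |delta 4 1 (fun n => (swapPow n + 1 : ℝ)) k| = 15 * 2 ^ k := by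
  rw [delta_one_apply, swapPow_of_mod_four_eq_one hk, swapPow_of_mod_four_eq_one (by omega), abs_sub_comm]
  push_cast
  rw [pow_add, abs_of_nonneg (by nlinarith [pow_pos (two_pos : (0 : ℝ) < 2) k])]
  ring

lemma exists_mod_four_eq_one_mul_lt_two_pow (C : ℝ) : ∃ k : ℕ, k % 4 = 1 ∧ C * (k + 1) < 2 ^ k := by
  obtain ⟨n, hn⟩ := exists_nat_gt C
  refine ⟨4 * n + 1, by omega, ?_⟩
  have h₁ : 2 * n + 1 ≤ 2 ^ (2 * n) := Nat.lt_two_pow_self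
  have h : n * (4 * n + 2) ≤ 2 ^ (4 * n + 1) := by
    calc n * (4 * n + 2) ≤ 2 ^ (2 * n) * (2 * 2 ^ (2 * n)) := by gcongr <;> omega
      _ = 2 ^ (4 * n + 1) := by ring
  have h' : (n : ℝ) * (4 * n + 2) ≤ 2 ^ (4 * n + 1) := by exact_mod_cast h
  push_cast
  nlinarith

theorem CInftyDelta4_not_symmetric :
    ¬ SymmetricSet (CInftyMDelta (fun t => t) 4 1) ∧
    ∃ x ∈ CInftyMDelta (fun t => t) 4 1, ∃ π : Equiv.Perm ℕ,
      x = (fun k : ℕ => (k + 1 : ℝ)) ∧ (fun k => x (π k)) ∉ CInftyMDelta (fun t => t) 4 1 := by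
  set x : ℕ → ℝ := fun k => (k + 1 : ℝ)
  set π : Equiv.Perm ℕ := swapPow_involutive.toPerm
  have hx : x ∈ CInftyMDelta (fun t => t) 4 1 := by
    refine mem_CInftyMDelta_of_abs_delta_eq (c := 4) fun k => ?_
    norm_num [delta_one_apply, x]
  have hπx : (fun k => x (π k)) ∉ CInftyMDelta (fun t => t) 4 1 := by
    intro h
    obtain ⟨C, hC⟩ := exists_abs_delta_le_of_mem_CInftyMDelta_id h
    obtain ⟨k, hk, hlt⟩ := exists_mod_four_eq_one_mul_lt_two_pow C
    have hΔ : |delta 4 1 (fun k => x (π k)) k| = 15 * 2 ^ k := abs_delta_four_swapPow hk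
    linarith [hC k, pow_pos (two_pos : (0 : ℝ) < 2) k]
  exact ⟨fun hsym => hπx (hsym x hx π), x, hx, π, rfl, hπx⟩
end

section
/- Let M be an Orlicz function and m ≥ 1, n ≥ 1 integers. Then C_∞(M, Δ_m^{n−1}) ⊆ C_∞(M, Δ_m^n); that is, if a real sequence x satisfies sup_{i≥1} (1/i) Σ_{k=1}^{i} M(|Δ_m^{n−1} x_k|/ρ) < ∞ for some ρ > 0, then sup_{i≥1} (1/i) Σ_{k=1}^{i} M(|Δ_m^n x_k|/ρ') < ∞ for some ρ' > 0 (one may take ρ' = 2ρ). -/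
/-!
Statement 14 (Paper: Theorem 3.5(b) for `Z = C_∞`).
`C_∞(M, Δ_m^{n-1}) ⊆ C_∞(M, Δ_m^n)`, with `ρ' = 2ρ` as a valid witness.
Sequences are indexed so that `x k` represents the paper's `x_{k+1}`.
-/

open scoped ENNReal

/-- An Orlicz function. -/
def IsOrliczFunction (M : ℝ → ℝ) : Prop :=
  ContinuousOn M (Set.Ici 0) ∧ MonotoneOn M (Set.Ici 0) ∧ ConvexOn ℝ (Set.Ici 0) M ∧
    M 0 = 0 ∧ (∀ x : ℝ, 0 < x → 0 < M x) ∧ Filter.Tendsto M Filter.atTop Filter.atTop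

/-
Convexity and monotonicity of `M` give `M(|a - b|/2ρ) ≤ (M(|a|/ρ) + M(|b|/ρ))/2`, so the Cesàro means
of `Δ_m^n x` at `2ρ` are bounded by half the sum of the means of `y = Δ_m^{n-1} x` and of its shift
`k ↦ y (k + m)` at `ρ`. Since `M ≥ 0`, the first `i` terms of the shift are among the first `i + m`
terms of `y`, and `(i + m)/i ≤ m + 1`, so the shifted means are at most `m + 1` times those of `y`.
-/

namespace IsOrliczFunction

variable {M : ℝ → ℝ}

lemma nonneg (hM : IsOrliczFunction M) {t : ℝ} (ht : 0 ≤ t) : 0 ≤ M t := by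
  simpa [hM.2.2.2.1] using hM.2.1 Set.self_mem_Ici ht ht

lemma apply_abs_sub_div_le (hM : IsOrliczFunction M) (a b : ℝ) {ρ : ℝ} (hρ : 0 < ρ) :
    M (|a - b| / (2 * ρ)) ≤ (M (|a| / ρ) + M (|b| / ρ)) / 2 := by
  have ha : 0 ≤ |a| / ρ := by positivity
  have hb : 0 ≤ |b| / ρ := by positivity
  have h_arg : |a - b| / (2 * ρ) ≤ (1 / 2 : ℝ) • (|a| / ρ) + (1 / 2 : ℝ) • (|b| / ρ) := by
    rw [smul_eq_mul, smul_eq_mul, div_le_iff₀ (by positivity)]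
    field_simp
    linarith [abs_sub a b]
  calc M (|a - b| / (2 * ρ))
      ≤ M ((1 / 2 : ℝ) • (|a| / ρ) + (1 / 2 : ℝ) • (|b| / ρ)) :=
        hM.2.1 (Set.mem_Ici.2 (by positivity)) (Set.mem_Ici.2 (by simp only [smul_eq_mul]; positivity))
          h_arg
    _ ≤ (1 / 2 : ℝ) • M (|a| / ρ) + (1 / 2 : ℝ) • M (|b| / ρ) :=
        hM.2.2.1.2 ha hb (by norm_num) (by norm_num) (by norm_num)
    _ = (M (|a| / ρ) + M (|b| / ρ)) / 2 := by simp only [smul_eq_mul]; ring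

end IsOrliczFunction

section Cesaro

variable {M : ℝ → ℝ} {ρ : ℝ}

lemma cesTerm_nonneg (hM : IsOrliczFunction M) (hρ : 0 ≤ ρ) (y : ℕ → ℝ) (i : ℕ) :
    0 ≤ cesTerm M y ρ i :=
  mul_nonneg (by positivity) (Finset.sum_nonneg fun _ _ => hM.nonneg (by positivity))

lemma cesTerm_comp_add_le (hM : IsOrliczFunction M) (hρ : 0 ≤ ρ) (y : ℕ → ℝ) (m i : ℕ) :
    cesTerm M (fun k => y (k + m)) ρ i ≤ (m + 1) * cesTerm M y ρ (i + m) := by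
  set f : ℕ → ℝ := fun k => M (|y k| / ρ)
  have hf : ∀ k, 0 ≤ f k := fun k => hM.nonneg (by positivity)
  have h_sum : ∑ k ∈ Finset.range (i + 1), f (k + m) ≤ ∑ k ∈ Finset.range (i + m + 1), f k :=
    calc ∑ k ∈ Finset.range (i + 1), f (k + m)
        = ∑ k ∈ Finset.Ico m (i + m + 1), f k := by
          rw [Finset.sum_Ico_eq_sum_range, show i + m + 1 - m = i + 1 by omega]
          simp_rw [add_comm m]
      _ ≤ ∑ k ∈ Finset.range (i + m + 1), f k := by
          refine Finset.sum_le_sum_of_subset_of_nonneg ?_ fun k _ _ => hf k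
          rw [Finset.range_eq_Ico]
          exact Finset.Ico_subset_Ico_left (Nat.zero_le m)
  have h_weight : 1 / (i + 1 : ℝ) ≤ (m + 1) * (1 / (i + m + 1 : ℝ)) := by
    rw [mul_one_div, div_le_div_iff₀ (by positivity) (by positivity)]
    nlinarith [(i.cast_nonneg : (0 : ℝ) ≤ i), (m.cast_nonneg : (0 : ℝ) ≤ m)]
  calc cesTerm M (fun k => y (k + m)) ρ i
      = 1 / (i + 1 : ℝ) * ∑ k ∈ Finset.range (i + 1), f (k + m) := rfl
    _ ≤ (m + 1) * (1 / (i + m + 1 : ℝ)) * ∑ k ∈ Finset.range (i + m + 1), f k :=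
        mul_le_mul h_weight h_sum (Finset.sum_nonneg fun k _ => hf (k + m)) (by positivity)
    _ = (m + 1) * cesTerm M y ρ (i + m) := by
        rw [mul_assoc]; unfold cesTerm; push_cast; rfl

lemma cesTerm_sub_le (hM : IsOrliczFunction M) (hρ : 0 < ρ) (y z : ℕ → ℝ) (i : ℕ) :
    cesTerm M (fun k => y k - z k) (2 * ρ) i ≤ (cesTerm M y ρ i + cesTerm M z ρ i) / 2 := by
  unfold cesTerm
  rw [← mul_add, mul_div_assoc, ← Finset.sum_add_distrib, Finset.sum_div]
  gcongr with k
  exact hM.apply_abs_sub_div_le (y k) (z k) hρ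

lemma cesSup_sub_comp_add_le (hM : IsOrliczFunction M) (hρ : 0 < ρ) (y : ℕ → ℝ) (m : ℕ) :
    cesSup M (fun k => y k - y (k + m)) (2 * ρ) ≤ ENNReal.ofReal ((m + 2) / 2) * cesSup M y ρ := by
  refine iSup_le fun i => ?_
  have h_le : ∀ j, ENNReal.ofReal (cesTerm M y ρ j) ≤ cesSup M y ρ :=
    le_iSup (fun j => ENNReal.ofReal (cesTerm M y ρ j))
  have h_sub := cesTerm_sub_le hM hρ y (fun k => y (k + m)) i
  have h_shift := cesTerm_comp_add_le hM hρ.le y m i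
  calc ENNReal.ofReal (cesTerm M (fun k => y k - y (k + m)) (2 * ρ) i)
      ≤ ENNReal.ofReal (1 / 2 * cesTerm M y ρ i + (m + 1) / 2 * cesTerm M y ρ (i + m)) :=
        ENNReal.ofReal_le_ofReal (by linarith)
    _ = ENNReal.ofReal (1 / 2) * ENNReal.ofReal (cesTerm M y ρ i)
          + ENNReal.ofReal ((m + 1) / 2) * ENNReal.ofReal (cesTerm M y ρ (i + m)) := by
        have h_nonneg := cesTerm_nonneg hM hρ.le y
        rw [ENNReal.ofReal_add (mul_nonneg (by norm_num) (h_nonneg i))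
          (mul_nonneg (by positivity) (h_nonneg (i + m))),
          ENNReal.ofReal_mul (by positivity), ENNReal.ofReal_mul (by positivity)]
    _ ≤ ENNReal.ofReal (1 / 2) * cesSup M y ρ + ENNReal.ofReal ((m + 1) / 2) * cesSup M y ρ := by
        gcongr <;> exact h_le _
    _ = ENNReal.ofReal ((m + 2) / 2) * cesSup M y ρ := by
        rw [← add_mul, ← ENNReal.ofReal_add (by positivity) (by positivity)]
        congr 2
        ring

end Cesaro

theorem CInfty_delta_inclusion_general (M : ℝ → ℝ) (hM : IsOrliczFunction M)
    (m n : ℕ) (hn : 1 ≤ n) (x : ℕ → ℝ) (ρ : ℝ) (hρ : 0 < ρ)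
    (h : cesSup M (delta m (n - 1) x) ρ < ⊤) :
    cesSup M (delta m n x) (2 * ρ) < ⊤ := by
  obtain ⟨n, rfl⟩ := Nat.exists_eq_add_of_le' hn
  exact (cesSup_sub_comp_add_le hM hρ (delta m n x) m).trans_lt
    (ENNReal.mul_lt_top ENNReal.ofReal_lt_top h)

theorem CInfty_delta_inclusion (M : ℝ → ℝ) (hM : IsOrliczFunction M)
    (m n : ℕ) (hm : 1 ≤ m) (hn : 1 ≤ n) (x : ℕ → ℝ) (ρ : ℝ) (hρ : 0 < ρ)
    (h : cesSup M (delta m (n - 1) x) ρ < ⊤) :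
    cesSup M (delta m n x) (2 * ρ) < ⊤ :=
  CInfty_delta_inclusion_general M hM m n hn x ρ hρ h
end

section
/- Let M be an Orlicz function, 1 ≤ p < ∞ and m ≥ 1, n ≥ 1 integers. Then ℓ_p(M, Δ_m^{n−1}) ⊆ ℓ_p(M, Δ_m^n); that is, if a real sequence x satisfies Σ_{k=1}^∞ (M(|Δ_m^{n−1} x_k|/ρ))^p < ∞ for some ρ > 0, then Σ_{k=1}^∞ (M(|Δ_m^n x_k|/ρ'))^p < ∞ for some ρ' > 0 (one may take ρ' = 2ρ). -/
/-!
Statement 15 (Paper: Theorem 3.5(b) for `Z = ℓ_p`).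
`ℓ_p(M, Δ_m^{n-1}) ⊆ ℓ_p(M, Δ_m^n)`, with `ρ' = 2ρ` as a valid witness.
Sequences are indexed so that `x k` represents the paper's `x_{k+1}`.
-/

open scoped ENNReal

/-- `∑_{k=1}^∞ (M (|x_k| / ρ))^p`, valued in `ℝ≥0∞`. -/
noncomputable def lpSum (M : ℝ → ℝ) (p : ℝ) (x : ℕ → ℝ) (ρ : ℝ) : ℝ≥0∞ :=
  ∑' k : ℕ, ENNReal.ofReal (M (|x k| / ρ)) ^ p

theorem lp_delta_inclusion (M : ℝ → ℝ) (hM : IsOrliczFunction M) (p : ℝ) (hp : 1 ≤ p)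
    (m n : ℕ) (hm : 1 ≤ m) (hn : 1 ≤ n) (x : ℕ → ℝ) (ρ : ℝ) (hρ : 0 < ρ)
    (h : lpSum M p (delta m (n - 1) x) ρ < ⊤) :
    lpSum M p (delta m n x) (2 * ρ) < ⊤ := by
  obtain ⟨n, rfl⟩ : ∃ n', n = n' + 1 := ⟨n - 1, (Nat.succ_pred_eq_of_pos hn).symm⟩
  simp only [Nat.add_sub_cancel] at h
  have hp0 : (0 : ℝ) ≤ p := le_trans zero_le_one hp
  set f : ℕ → ℝ≥0∞ := fun k => ENNReal.ofReal (M (|delta m n x k| / ρ)) ^ p with hf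
  have hMmono := hM.2.1
  have key : ∀ k, ENNReal.ofReal (M (|delta m (n + 1) x k| / (2 * ρ))) ^ p
      ≤ f k + f (k + m) := by
    intro k
    set a := delta m n x k
    set b := delta m n x (k + m)
    have hd : delta m (n + 1) x k = a - b := rfl
    have habs : |a - b| ≤ |a| + |b| := abs_sub _ _
    have h2ρ : (0 : ℝ) < 2 * ρ := by linarith
    have hmem1 : |a - b| / (2 * ρ) ∈ Set.Ici (0 : ℝ) :=
      div_nonneg (abs_nonneg _) h2ρ.le
    rcases le_total (|a| / ρ) (|b| / ρ) with hab | hab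
    · have hle : |a - b| / (2 * ρ) ≤ |b| / ρ := by
        rw [div_le_div_iff₀ h2ρ hρ]
        rw [div_le_div_iff₀ hρ hρ] at hab
        nlinarith [abs_nonneg a, abs_nonneg b]
      have := hMmono hmem1 (Set.mem_Ici.2 (div_nonneg (abs_nonneg _) hρ.le)) hle
      calc ENNReal.ofReal (M (|delta m (n + 1) x k| / (2 * ρ))) ^ p
          ≤ f (k + m) := by
            rw [hd]
            exact ENNReal.rpow_le_rpow (ENNReal.ofReal_le_ofReal this) hp0
        _ ≤ f k + f (k + m) := le_add_self
    · have hle : |a - b| / (2 * ρ) ≤ |a| / ρ := by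
        rw [div_le_div_iff₀ h2ρ hρ]
        rw [div_le_div_iff₀ hρ hρ] at hab
        nlinarith [abs_nonneg a, abs_nonneg b]
      have := hMmono hmem1 (Set.mem_Ici.2 (div_nonneg (abs_nonneg _) hρ.le)) hle
      calc ENNReal.ofReal (M (|delta m (n + 1) x k| / (2 * ρ))) ^ p
          ≤ f k := by
            rw [hd]
            exact ENNReal.rpow_le_rpow (ENNReal.ofReal_le_ofReal this) hp0
        _ ≤ f k + f (k + m) := le_self_add
  have hshift : (∑' k, f (k + m)) ≤ ∑' k, f k :=
    ENNReal.tsum_comp_le_tsum_of_injective (add_left_injective m) f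
  calc lpSum M p (delta m (n + 1) x) (2 * ρ)
      ≤ ∑' k, (f k + f (k + m)) := ENNReal.tsum_le_tsum key
    _ = (∑' k, f k) + ∑' k, f (k + m) := ENNReal.tsum_add
    _ ≤ (∑' k, f k) + ∑' k, f k := add_le_add le_rfl hshift
    _ < ⊤ := ENNReal.add_lt_top.2 ⟨h, h⟩
end

section
/- Let M be an Orlicz function, 1 ≤ p < ∞ and m ≥ 1, n ≥ 1 integers. Then C_p(M) ⊆ C_p(M, Δ_m^n); that is, if a real sequence x satisfies Σ_{i=1}^∞ ((1/i) Σ_{k=1}^{i} M(|x_k|/ρ))^p < ∞ for some ρ > 0, then Σ_{i=1}^∞ ((1/i) Σ_{k=1}^{i} M(|Δ_m^n x_k|/ρ'))^p < ∞ for some ρ' > 0. -/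
/-!
Statement 18 (Paper: Theorem 3.6(b)).  `C_p(M) ⊆ C_p(M, Δ_m^n)`:
if `∑_{i=1}^∞ ((1/i) ∑_{k=1}^{i} M(|x_k|/ρ))^p < ∞` for some `ρ > 0`, then
`∑_{i=1}^∞ ((1/i) ∑_{k=1}^{i} M(|Δ_m^n x_k|/ρ'))^p < ∞` for some `ρ' > 0`.
Sequences are indexed so that `x k` represents the paper's `x_{k+1}`.
-/

open scoped ENNReal

/-- `∑_{i=1}^∞ ((1/i) ∑_{k=1}^{i} M(|x_k|/ρ))^p`, valued in `ℝ≥0∞`. -/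
noncomputable def cesaroSum (M : ℝ → ℝ) (p : ℝ) (x : ℕ → ℝ) (ρ : ℝ) : ℝ≥0∞ :=
  ∑' i : ℕ, ENNReal.ofReal (cesTerm M x ρ i) ^ p

/-
Since `M` is monotone with `M 0 = 0`, `M s ≤ M a + M b` whenever `0 ≤ s ≤ max a b`. Combined with
`|Δⁿ⁺¹ x_k| ≤ |Δⁿ x_k| + |Δⁿ x_{k+m}|`, induction on `n` gives
`M (|Δⁿ x_k| / (2ⁿ ρ)) ≤ 2ⁿ ∑_{j ≤ n} M (|x_{k+jm}| / ρ)`. Summing over `k ≤ i`, the Cesàro mean of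
the differenced sequence at scale `2ⁿ ρ` is at most a constant times the Cesàro mean of `x` at index
`i + nm`, so the series of `p`-th powers is dominated by a constant times a tail of the original one.
-/

open Finset

section Monotone

variable {M : ℝ → ℝ}

lemma MonotoneOn.apply_nonneg (hmono : MonotoneOn M (Set.Ici 0)) (h0 : 0 ≤ M 0) {t : ℝ}
    (ht : 0 ≤ t) : 0 ≤ M t :=
  h0.trans (hmono Set.self_mem_Ici ht ht)

lemma MonotoneOn.apply_le_add_of_le_max (hmono : MonotoneOn M (Set.Ici 0)) (h0 : 0 ≤ M 0)
    {s a b : ℝ} (hs : 0 ≤ s) (ha : 0 ≤ a) (hb : 0 ≤ b) (h : s ≤ max a b) :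
    M s ≤ M a + M b :=
  calc M s ≤ M (max a b) := hmono hs (le_max_of_le_left ha) h
    _ = max (M a) (M b) := hmono.map_max ha hb
    _ ≤ M a + M b := max_le_add_of_nonneg (hmono.apply_nonneg h0 ha) (hmono.apply_nonneg h0 hb)

lemma MonotoneOn.apply_abs_delta_le (hmono : MonotoneOn M (Set.Ici 0)) (h0 : 0 ≤ M 0)
    {ρ : ℝ} (hρ : 0 ≤ ρ) (m : ℕ) (x : ℕ → ℝ) (n k : ℕ) :
    M (|delta m n x k| / (2 ^ n * ρ)) ≤
      2 ^ n * ∑ j ∈ range (n + 1), M (|x (k + j * m)| / ρ) := by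
  induction n generalizing k with
  | zero => simp [delta]
  | succ n ih =>
    set f : ℕ → ℝ := fun k => M (|x k| / ρ)
    have hf : ∀ k, 0 ≤ f k := fun k => hmono.apply_nonneg h0 (by positivity)
    set a := |delta m n x k| / (2 ^ n * ρ)
    set b := |delta m n x (k + m)| / (2 ^ n * ρ)
    have hle_max : |delta m (n + 1) x k| / (2 ^ (n + 1) * ρ) ≤ max a b :=
      calc |delta m (n + 1) x k| / (2 ^ (n + 1) * ρ)
          ≤ (|delta m n x k| + |delta m n x (k + m)|) / (2 ^ (n + 1) * ρ) :=
            div_le_div_of_nonneg_right (abs_sub _ _) (by positivity)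
        _ = (a + b) / 2 := by rw [pow_succ]; ring
        _ ≤ max a b := by linarith [le_max_left a b, le_max_right a b]
    have hle_succ : ∑ j ∈ range (n + 1), f (k + j * m) ≤ ∑ j ∈ range (n + 2), f (k + j * m) := by
      rw [sum_range_succ _ (n + 1)]
      exact le_add_of_nonneg_right (hf _)
    have hshift_le_succ :
        ∑ j ∈ range (n + 1), f (k + m + j * m) ≤ ∑ j ∈ range (n + 2), f (k + j * m) := by
      rw [sum_range_succ' _ (n + 1), zero_mul, add_zero]
      exact le_add_of_le_of_nonneg (sum_congr rfl fun j _ => by ring_nf).le (hf k)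
    calc M (|delta m (n + 1) x k| / (2 ^ (n + 1) * ρ)) ≤ M a + M b :=
          hmono.apply_le_add_of_le_max h0 (by positivity) (by positivity) (by positivity) hle_max
      _ ≤ 2 ^ n * ∑ j ∈ range (n + 1), f (k + j * m)
          + 2 ^ n * ∑ j ∈ range (n + 1), f (k + m + j * m) := add_le_add (ih k) (ih (k + m))
      _ ≤ 2 ^ n * ∑ j ∈ range (n + 2), f (k + j * m)
          + 2 ^ n * ∑ j ∈ range (n + 2), f (k + j * m) := by
        gcongr
      _ = 2 ^ (n + 1) * ∑ j ∈ range (n + 2), f (k + j * m) := by ring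

end Monotone

noncomputable def cesaroMean (f : ℕ → ℝ) (i : ℕ) : ℝ :=
  (1 / (i + 1 : ℝ)) * ∑ k ∈ range (i + 1), f k

section Cesaro

variable {f g : ℕ → ℝ}

lemma sum_range_add_le_sum_range (hf : ∀ k, 0 ≤ f k) {c d : ℕ} (hcd : c ≤ d) (N : ℕ) :
    ∑ k ∈ range N, f (k + c) ≤ ∑ k ∈ range (N + d), f k :=
  calc ∑ k ∈ range N, f (k + c) = ∑ k ∈ range N, f (c + k) := by simp only [add_comm]
    _ ≤ ∑ k ∈ range c, f k + ∑ k ∈ range N, f (c + k) :=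
      le_add_of_nonneg_left (sum_nonneg fun k _ => hf k)
    _ = ∑ k ∈ range (c + N), f k := (sum_range_add f c N).symm
    _ ≤ ∑ k ∈ range (N + d), f k :=
      sum_le_sum_of_subset_of_nonneg (range_subset_range.mpr (by omega)) fun k _ _ => hf k

lemma sum_range_le_of_le_window_sum (hf : ∀ k, 0 ≤ f k) {C : ℝ} (hC : 0 ≤ C) {m n : ℕ}
    (hg : ∀ k, g k ≤ C * ∑ j ∈ range (n + 1), f (k + j * m)) (N : ℕ) :
    ∑ k ∈ range N, g k ≤ C * (n + 1) * ∑ k ∈ range (N + n * m), f k :=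
  calc ∑ k ∈ range N, g k ≤ ∑ k ∈ range N, C * ∑ j ∈ range (n + 1), f (k + j * m) :=
        sum_le_sum fun k _ => hg k
    _ = C * ∑ j ∈ range (n + 1), ∑ k ∈ range N, f (k + j * m) := by rw [← mul_sum, sum_comm]
    _ ≤ C * ∑ j ∈ range (n + 1), ∑ k ∈ range (N + n * m), f k := by
      gcongr with j hj
      exact sum_range_add_le_sum_range hf
        (Nat.mul_le_mul_right m (Nat.lt_succ_iff.mp (mem_range.mp hj))) N
    _ = C * (n + 1) * ∑ k ∈ range (N + n * m), f k := by
      rw [sum_const, card_range, nsmul_eq_mul]; push_cast; ring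

lemma cesaroMean_le_of_le_window_sum (hf : ∀ k, 0 ≤ f k) {C : ℝ} (hC : 0 ≤ C) {m n : ℕ}
    (hg : ∀ k, g k ≤ C * ∑ j ∈ range (n + 1), f (k + j * m)) (i : ℕ) :
    cesaroMean g i ≤ C * (n + 1) * (n * m + 1) * cesaroMean f (i + n * m) := by
  have hsum := sum_range_le_of_le_window_sum hf hC hg (i + 1)
  have hS : 0 ≤ ∑ k ∈ range (i + 1 + n * m), f k := sum_nonneg fun k _ => hf k
  have hweight : 1 / (i + 1 : ℝ) ≤ (n * m + 1) * (1 / ((i + n * m : ℕ) + 1 : ℝ)) := by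
    rw [mul_one_div, div_le_div_iff₀ (by positivity) (by positivity)]
    push_cast
    nlinarith [mul_nonneg (mul_nonneg (n.cast_nonneg : (0 : ℝ) ≤ n) m.cast_nonneg) i.cast_nonneg]
  unfold cesaroMean
  rw [show i + n * m + 1 = i + 1 + n * m by omega]
  calc 1 / (i + 1 : ℝ) * ∑ k ∈ range (i + 1), g k
      ≤ 1 / (i + 1 : ℝ) * (C * (n + 1) * ∑ k ∈ range (i + 1 + n * m), f k) := by gcongr
    _ ≤ (n * m + 1) * (1 / ((i + n * m : ℕ) + 1 : ℝ)) *
        (C * (n + 1) * ∑ k ∈ range (i + 1 + n * m), f k) := by gcongr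
    _ = _ := by ring

end Cesaro

lemma tsum_ofReal_rpow_le_of_le_shift {a b : ℕ → ℝ} {C p : ℝ} (hC : 0 ≤ C) (hp : 0 ≤ p)
    {s : ℕ} (hab : ∀ i, a i ≤ C * b (i + s)) :
    ∑' i, ENNReal.ofReal (a i) ^ p ≤ ENNReal.ofReal C ^ p * ∑' i, ENNReal.ofReal (b i) ^ p :=
  calc ∑' i, ENNReal.ofReal (a i) ^ p
      ≤ ∑' i, ENNReal.ofReal C ^ p * ENNReal.ofReal (b (i + s)) ^ p := by
        refine ENNReal.tsum_le_tsum fun i => ?_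
        rw [← ENNReal.mul_rpow_of_nonneg _ _ hp, ← ENNReal.ofReal_mul hC]
        exact ENNReal.rpow_le_rpow (ENNReal.ofReal_le_ofReal (hab i)) hp
    _ = ENNReal.ofReal C ^ p * ∑' i, ENNReal.ofReal (b (i + s)) ^ p := ENNReal.tsum_mul_left
    _ ≤ ENNReal.ofReal C ^ p * ∑' i, ENNReal.ofReal (b i) ^ p :=
        mul_le_mul_right (ENNReal.tsum_comp_le_tsum_of_injective (add_left_injective s) _) _

theorem Cp_subset_CpDelta_general (M : ℝ → ℝ) (hM : IsOrliczFunction M) (p : ℝ) (hp : 1 ≤ p)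
    (m n : ℕ) (x : ℕ → ℝ)
    (h : ∃ ρ > 0, cesaroSum M p x ρ < ⊤) :
    ∃ ρ' > 0, cesaroSum M p (delta m n x) ρ' < ⊤ := by
  obtain ⟨-, hmono, -, h0, -, -⟩ := hM
  obtain ⟨ρ, hρ, hfin⟩ := h
  -- `cesTerm M x ρ` unfolds to `cesaroMean (fun k => M (|x k| / ρ))`.
  have hmean (i : ℕ) : cesTerm M (delta m n x) (2 ^ n * ρ) i ≤
      2 ^ n * (n + 1) * (n * m + 1) * cesTerm M x ρ (i + n * m) :=
    cesaroMean_le_of_le_window_sum (fun k => hmono.apply_nonneg h0.ge (by positivity))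
      (by positivity) (hmono.apply_abs_delta_le h0.ge hρ.le m x n) i
  refine ⟨2 ^ n * ρ, by positivity, ?_⟩
  calc cesaroSum M p (delta m n x) (2 ^ n * ρ)
      ≤ ENNReal.ofReal (2 ^ n * (n + 1) * (n * m + 1)) ^ p * cesaroSum M p x ρ :=
        tsum_ofReal_rpow_le_of_le_shift (by positivity) (by linarith) hmean
    _ < ⊤ := ENNReal.mul_lt_top (ENNReal.rpow_lt_top_of_nonneg (by linarith) ENNReal.ofReal_ne_top) hfin

theorem Cp_subset_CpDelta (M : ℝ → ℝ) (hM : IsOrliczFunction M) (p : ℝ) (hp : 1 ≤ p)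
    (m n : ℕ) (hm : 1 ≤ m) (hn : 1 ≤ n) (x : ℕ → ℝ)
    (h : ∃ ρ > 0, cesaroSum M p x ρ < ⊤) :
    ∃ ρ' > 0, cesaroSum M p (delta m n x) ρ' < ⊤ :=
  Cp_subset_CpDelta_general M hM p hp m n x h
end

section
/- Let M and M₁ be Orlicz functions, where M satisfies the Δ₂-condition in the sense that there exists K > 0 such that M(Lx) ≤ K·L·M(x) for all x > 0 and all L > 1. Let 1 ≤ p < ∞ and m ≥ 1, n ≥ 1 be integers. Then ℓ_p(M₁, Δ_m^n) ⊆ ℓ_p(M∘M₁, Δ_m^n); that is, if a real sequence x satisfies Σ_{k=1}^∞ (M₁(|Δ_m^n x_k|/ρ))^p < ∞ for some ρ > 0, then Σ_{k=1}^∞ (M(M₁(|Δ_m^n x_k|/ρ)))^p < ∞ for the same ρ. -/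
/-!
Statement 19 (Paper: Theorem 3.7(i) for `Z = ℓ_p`).  If `M` satisfies the
`Δ₂`-condition, then `ℓ_p(M₁, Δ_m^n) ⊆ ℓ_p(M ∘ M₁, Δ_m^n)` with the same `ρ`.
Sequences are indexed so that `x k` represents the paper's `x_{k+1}`.
-/

open scoped ENNReal

/-- The `Δ₂`-condition: there is `K > 0` with `M (L * x) ≤ K * L * M x`
for all `x > 0` and all `L > 1`. -/
def Delta2Condition (M : ℝ → ℝ) : Prop :=
  ∃ K > 0, ∀ x : ℝ, 0 < x → ∀ L : ℝ, 1 < L → M (L * x) ≤ K * L * M x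

theorem lp_orlicz_composition (M M₁ : ℝ → ℝ)
    (hM : IsOrliczFunction M) (hM₁ : IsOrliczFunction M₁) (hΔ₂ : Delta2Condition M)
    (p : ℝ) (hp : 1 ≤ p) (m n : ℕ) (hm : 1 ≤ m) (hn : 1 ≤ n)
    (x : ℕ → ℝ) (ρ : ℝ) (hρ : 0 < ρ)
    (h : (∑' k : ℕ, ENNReal.ofReal (M₁ (|delta m n x k| / ρ)) ^ p) < ⊤) :
    (∑' k : ℕ, ENNReal.ofReal (M (M₁ (|delta m n x k| / ρ))) ^ p) < ⊤ := by
  obtain ⟨K, hK, hKle⟩ := hΔ₂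
  obtain ⟨-, -, hconv, hM0, hMpos, -⟩ := hM
  set C : ℝ := max (M 1) (K * M 1) with hC
  have hM1pos : 0 < M 1 := hMpos 1 one_pos
  have hC0 : 0 ≤ C := le_trans hM1pos.le (le_max_left _ _)
  -- global linear bound `M t ≤ C * t` for `t ≥ 0`
  have hbound : ∀ t : ℝ, 0 ≤ t → M t ≤ C * t := by
    intro t ht
    rcases ht.eq_or_lt with h0 | h0
    · simp [← h0, hM0]
    rcases le_or_gt t 1 with h1 | h1
    · have := hconv.2 (by simp : (0:ℝ) ∈ Set.Ici 0) (by simp : (1:ℝ) ∈ Set.Ici 0)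
        (by linarith : (0:ℝ) ≤ 1 - t) h0.le (by ring)
      simp only [smul_eq_mul, mul_zero, zero_add, mul_one, hM0] at this
      calc M t ≤ t * M 1 := by simpa using this
        _ ≤ C * t := by
            rw [mul_comm]
            exact mul_le_mul_of_nonneg_right (le_max_left _ _) h0.le
    · have := hKle 1 one_pos t h1
      calc M t = M (t * 1) := by ring_nf
        _ ≤ K * t * M 1 := this
        _ = (K * M 1) * t := by ring
        _ ≤ C * t := mul_le_mul_of_nonneg_right (le_max_right _ _) h0.le
  have hM₁nonneg : ∀ k : ℕ, 0 ≤ M₁ (|delta m n x k| / ρ) := by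
    intro k
    rcases (div_nonneg (abs_nonneg _) hρ.le : (0:ℝ) ≤ |delta m n x k| / ρ).eq_or_lt with h0 | h0
    · rw [← h0]; rw [hM₁.2.2.2.1]
    · exact (hM₁.2.2.2.2.1 _ h0).le
  have hp0 : (0:ℝ) ≤ p := le_trans zero_le_one hp
  have key : ∀ k : ℕ, ENNReal.ofReal (M (M₁ (|delta m n x k| / ρ))) ^ p ≤
      ENNReal.ofReal C ^ p * ENNReal.ofReal (M₁ (|delta m n x k| / ρ)) ^ p := by
    intro k
    set t := M₁ (|delta m n x k| / ρ) with ht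
    have h1 : ENNReal.ofReal (M t) ≤ ENNReal.ofReal C * ENNReal.ofReal t := by
      rw [← ENNReal.ofReal_mul hC0]
      exact ENNReal.ofReal_le_ofReal (hbound t (hM₁nonneg k))
    calc ENNReal.ofReal (M t) ^ p ≤ (ENNReal.ofReal C * ENNReal.ofReal t) ^ p :=
          ENNReal.rpow_le_rpow h1 hp0
      _ = ENNReal.ofReal C ^ p * ENNReal.ofReal t ^ p :=
          ENNReal.mul_rpow_of_nonneg _ _ hp0
  calc (∑' k : ℕ, ENNReal.ofReal (M (M₁ (|delta m n x k| / ρ))) ^ p)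
      ≤ ∑' k : ℕ, ENNReal.ofReal C ^ p * ENNReal.ofReal (M₁ (|delta m n x k| / ρ)) ^ p :=
        ENNReal.tsum_le_tsum key
    _ = ENNReal.ofReal C ^ p * ∑' k : ℕ, ENNReal.ofReal (M₁ (|delta m n x k| / ρ)) ^ p :=
        ENNReal.tsum_mul_left
    _ < ⊤ := ENNReal.mul_lt_top
        (ENNReal.rpow_lt_top_of_nonneg hp0 ENNReal.ofReal_ne_top) h
end
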